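/- The absolute value of the asynchronous temporal robustness is bounded above by the absolute value of the synchronous temporal robustness: |θ^c(x)| ≤ |η^c(x)|. -/

import Mathlib

open scoped Classical

noncomputable section

def shift {α : Type*} (x : ℤ → α) (κ : ℤ) : ℤ → α := fun t => x (t + κ)

def ashift {n : ℕ} (x : ℤ → Fin n → ℝ) (κ : Fin n → ℤ) : ℤ → Fin n → ℝ :=
  fun t i => x (t + κ i) i

def beta {n : ℕ} (c : (Fin n → ℝ) → ℤ → ℝ) (x : ℤ → Fin n → ℝ) : ℤ :=
  if ∀ t : ℤ, 0 ≤ c (x t) t then 1 else -1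

def absE (a : EReal) : EReal := max a (-a)

def eta {n : ℕ} (c : (Fin n → ℝ) → ℤ → ℝ) (x : ℤ → Fin n → ℝ) : EReal :=
  ((beta c x : ℝ) : EReal) * sSup ((fun τ : ℕ => ((τ : ℝ) : EReal)) ''
    {τ : ℕ | ∀ κ : ℤ, |κ| ≤ (τ : ℤ) → beta c (shift x κ) = beta c x})

def theta {n : ℕ} (c : (Fin n → ℝ) → ℤ → ℝ) (x : ℤ → Fin n → ℝ) : EReal :=
  ((beta c x : ℝ) : EReal) * sSup ((fun τ : ℕ => ((τ : ℝ) : EReal)) ''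
    {τ : ℕ | ∀ κ : Fin n → ℤ, (∀ i, |κ i| ≤ (τ : ℤ)) → beta c (ashift x κ) = beta c x})

/-!
A constant shift vector `fun _ => κ` turns the asynchronous shift into the synchronous one, so every
radius admissible for `θ` is admissible for `η`. Radius `0` is always admissible, so both suprema
are nonnegative, and `|β · s| = s` for `β = ±1`, `s ≥ 0`; monotonicity of `sSup` concludes.
-/

lemma absE_of_nonneg {a : EReal} (ha : 0 ≤ a) : absE a = a :=
  max_eq_left (le_trans (EReal.neg_le_neg_iff.mpr ha) (by simpa using ha))

lemma absE_neg (a : EReal) : absE (-a) = absE a := by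
  rw [absE, absE, neg_neg, max_comm]

lemma sSup_natCast_image_nonneg {S : Set ℕ} (hS : 0 ∈ S) :
    0 ≤ sSup ((fun τ : ℕ => ((τ : ℝ) : EReal)) '' S) :=
  le_sSup ⟨0, hS, by simp⟩

section Robustness

variable {n : ℕ} (c : (Fin n → ℝ) → ℤ → ℝ) (x : ℤ → Fin n → ℝ)

lemma ashift_const (κ : ℤ) : ashift x (fun _ => κ) = shift x κ :=
  rfl

lemma ashift_zero : ashift x 0 = x := by
  funext t i
  simp [ashift]

lemma beta_eq_one_or_neg_one : beta c x = 1 ∨ beta c x = -1 := by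
  unfold beta
  split_ifs <;> simp

lemma absE_beta_mul {s : EReal} (hs : 0 ≤ s) : absE (((beta c x : ℝ) : EReal) * s) = s := by
  rcases beta_eq_one_or_neg_one c x with h | h <;> rw [h]
  · simpa using absE_of_nonneg hs
  · simpa [absE_neg] using absE_of_nonneg hs

def syncRobustRadii : Set ℕ :=
  {τ | ∀ κ : ℤ, |κ| ≤ (τ : ℤ) → beta c (shift x κ) = beta c x}

def asyncRobustRadii : Set ℕ :=
  {τ | ∀ κ : Fin n → ℤ, (∀ i, |κ i| ≤ (τ : ℤ)) → beta c (ashift x κ) = beta c x}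

lemma eta_eq : eta c x = ((beta c x : ℝ) : EReal) *
    sSup ((fun τ : ℕ => ((τ : ℝ) : EReal)) '' syncRobustRadii c x) :=
  rfl

lemma theta_eq : theta c x = ((beta c x : ℝ) : EReal) *
    sSup ((fun τ : ℕ => ((τ : ℝ) : EReal)) '' asyncRobustRadii c x) :=
  rfl

lemma asyncRobustRadii_subset_syncRobustRadii : asyncRobustRadii c x ⊆ syncRobustRadii c x :=
  fun _ hτ κ hκ => ashift_const x κ ▸ hτ (fun _ => κ) fun _ => hκ

lemma zero_mem_asyncRobustRadii : 0 ∈ asyncRobustRadii c x := by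
  intro κ hκ
  obtain rfl : κ = 0 := funext fun i => abs_nonpos_iff.mp (hκ i)
  rw [ashift_zero]

end Robustness

/-- |θ^c(x)| ≤ |η^c(x)|. -/
theorem stmt4 {n : ℕ} (c : (Fin n → ℝ) → ℤ → ℝ) (x : ℤ → Fin n → ℝ) :
    absE (theta c x) ≤ absE (eta c x) := by
  have hsub := asyncRobustRadii_subset_syncRobustRadii c x
  have h0 := zero_mem_asyncRobustRadii c x
  rw [theta_eq, eta_eq, absE_beta_mul c x (sSup_natCast_image_nonneg h0),
    absE_beta_mul c x (sSup_natCast_image_nonneg (hsub h0))]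
  exact sSup_le_sSup (Set.image_mono hsub)
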